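/- arXiv:1205.1084 — 6 statements merged into one kernel-verified Lean document; each statement's English description precedes it below -/
import Mathlib

section
/- Let p ≥ 3 be a prime and v, b, r, λ positive integers with v > p + 1, satisfying v·r = b·(v - p), λ·(b - 1) = (v - p)·(r - 1), λ ≥ 1, b = v, r = v - p, and p does not divide v. Then p divides v - 1, and writing v = p·a + 1 with a = (v-1)/p, a ≥ 2 divides p - 1 and λ = p(a - 2) + (p + a - 1)/a. -/
/-- Case 1 of Theorem 1: with b = v, r = v - p and p ∤ v, one gets p ∣ v - 1,
    a = (v-1)/p ≥ 2 divides p - 1, and λ = p(a-2) + (p+a-1)/a. -/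
theorem stmt_1 (p v b r lam : ℕ) (hp : p.Prime) (hp3 : 3 ≤ p)
    (hv : p + 1 < v)
    (h1 : v * r = b * (v - p))
    (h2 : lam * (b - 1) = (v - p) * (r - 1))
    (hlam : 1 ≤ lam)
    (hb : b = v) (hr : r = v - p) (hpv : ¬ p ∣ v) :
    p ∣ v - 1 ∧ 2 ≤ (v - 1) / p ∧ (v - 1) / p ∣ p - 1 ∧
      lam = p * ((v - 1) / p - 2) + (p + (v - 1) / p - 1) / ((v - 1) / p) := by
  rw [hb, hr] at h2
  have hpv' : p ≤ v := by omega
  have h1v : 1 ≤ v := by omega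
  -- key equation over ℤ
  have key : (lam : ℤ) * (v - 1) = ((v : ℤ) - p) * ((v : ℤ) - p - 1) := by
    have := h2
    zify [hpv', h1v, show 1 ≤ v - p by omega] at this
    linarith [this]
  have hdvdZ : ((v : ℤ) - 1) ∣ (p : ℤ) * ((p : ℤ) - 1) := by
    refine ⟨(lam : ℤ) - (v : ℤ) + 2 * p, ?_⟩
    linear_combination -key
  have hdvd : (v - 1) ∣ p * (p - 1) := by
    rw [← Int.natCast_dvd_natCast, Nat.cast_mul, Nat.cast_sub h1v,
      Nat.cast_sub (show 1 ≤ p by omega), Nat.cast_one]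
    exact hdvdZ
  have hpd : p ∣ v - 1 := by
    by_contra h
    have cop : Nat.Coprime p (v - 1) := (Nat.Prime.coprime_iff_not_dvd hp).mpr h
    have hd : (v - 1) ∣ (p - 1) := cop.symm.dvd_of_dvd_mul_left hdvd
    have := Nat.le_of_dvd (by omega) hd
    omega
  obtain ⟨a, ha⟩ := hpd
  have haq : (v - 1) / p = a := by rw [ha]; exact Nat.mul_div_cancel_left a hp.pos
  have ha2 : 2 ≤ a := by
    by_contra h
    interval_cases a <;> omega
  have hadvd : a ∣ p - 1 := by
    rw [ha] at hdvd
    exact (Nat.mul_dvd_mul_iff_left hp.pos).mp hdvd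
  obtain ⟨k, hk⟩ := hadvd
  have hdiv : (p + a - 1) / a = k + 1 := by
    have : p + a - 1 = a * (k + 1) := by
      have e : a * (k + 1) = a * k + a := by ring
      omega
    rw [this, Nat.mul_div_cancel_left _ (by omega)]
  refine ⟨⟨a, ha⟩, by rw [haq]; exact ha2, by rw [haq]; exact ⟨k, hk⟩, ?_⟩
  rw [haq, hdiv]
  -- now show lam = p * (a - 2) + (k + 1)
  have hvz : (v : ℤ) = p * a + 1 := by
    have : v - 1 = p * a := ha
    zify [h1v] at this
    linarith
  have hkz : (p : ℤ) - 1 = a * k := by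
    have := hk
    zify [show 1 ≤ p by omega] at this
    linarith
  have hmain : (lam : ℤ) * ((p : ℤ) * a) = ((p : ℤ) * ((a : ℤ) - 2) + (k + 1)) * ((p : ℤ) * a) := by
    have hR : (lam : ℤ) * ((p : ℤ) * a) = ((v : ℤ) - p) * ((v : ℤ) - p - 1) := by
      rw [← key, hvz]; ring
    rw [hR, hvz]
    linear_combination ((p : ℤ)) * hkz
  have hcancel : (lam : ℤ) = (p : ℤ) * ((a : ℤ) - 2) + (k + 1) := by
    have hne : ((p : ℤ) * a) ≠ 0 := by positivity
    exact mul_right_cancel₀ hne hmain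
  zify [ha2]
  linarith [hcancel]
end

section
/- Let p ≥ 3 be a prime, a ≥ 2 an integer, v = p·a, and suppose positive integers b, r, λ with λ ≥ 1 satisfy v·r = b·(v - p), λ·(b - 1) = (v - p)·(r - 1), b ≤ v, and r ≤ v - p. Then there exists an integer t with 1 ≤ t ≤ p such that b = a·t and r = (a - 1)·t. -/
/-- Case 2 of Theorem 1: v = pa, so b = at and r = (a-1)t with 1 ≤ t ≤ p. -/
theorem stmt_2 (p a v b r lam : ℕ) (hp : p.Prime) (hp3 : 3 ≤ p)
    (ha : 2 ≤ a) (hv : v = p * a)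
    (hb : 1 ≤ b) (hr : 1 ≤ r) (hlam : 1 ≤ lam)
    (h1 : v * r = b * (v - p))
    (h2 : lam * (b - 1) = (v - p) * (r - 1))
    (hfb : b ≤ v) (hfr : r ≤ v - p) :
    ∃ t, 1 ≤ t ∧ t ≤ p ∧ b = a * t ∧ r = (a - 1) * t := by
  have hp0 : 0 < p := by omega
  have ha0 : 0 < a := by omega
  have hvp : v - p = p * (a - 1) := by
    subst hv; rw [Nat.mul_sub_one]
  have key : a * r = b * (a - 1) := by
    have h1' : p * (a * r) = p * (b * (a - 1)) := by
      rw [hvp, hv] at h1; ring_nf at h1 ⊢; linarith [h1]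
    exact Nat.eq_of_mul_eq_mul_left hp0 h1'
  have hcop : Nat.Coprime a (a - 1) := by
    have : a - 1 + 1 = a := by omega
    rw [← this]; simp
  have hdvd : a ∣ b := by
    have : a ∣ b * (a - 1) := ⟨r, key.symm⟩
    exact hcop.dvd_of_dvd_mul_right this
  obtain ⟨t, ht⟩ := hdvd
  refine ⟨t, ?_, ?_, ht, ?_⟩
  · nlinarith
  · have : a * t ≤ p * a := by rw [← ht, ← hv]; exact hfb
    nlinarith
  · have : a * r = a * ((a - 1) * t) := by rw [key, ht]; ring
    exact Nat.eq_of_mul_eq_mul_left ha0 this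
end

section
/- Let p ≥ 3 be a prime, a ≥ 2, t ≥ 2 integers with a·t - 1 = p·s for some positive integer s, and suppose (at - 1) divides p(t - 1). Then s divides t - 1, a divides p·s + 1, and if moreover λ = p(a-2) + (ps - a + 1)/(a·s) is an integer, then s divides a - 1 and (a-1)/(p-a) ≤ s ≤ a - 1 ≤ p - 2. -/
/-- Divisibility constraints in case (f) of Theorem 1: with at - 1 = ps,
    s ∣ t - 1, a ∣ ps + 1, and integrality of λ forces s ∣ a - 1 and
    (a-1)/(p-a) ≤ s ≤ a - 1 ≤ p - 2. -/
theorem stmt_4 (p a t s : ℕ) (hp : p.Prime) (hp3 : 3 ≤ p)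
    (ha : 2 ≤ a) (ht : 2 ≤ t) (hs : 1 ≤ s)
    (hats : a * t - 1 = p * s)
    (hdvd : (a * t - 1) ∣ p * (t - 1)) :
    s ∣ t - 1 ∧ a ∣ p * s + 1 ∧
      ((a * s) ∣ (p * s + 1 - a) →
        s ∣ a - 1 ∧ (a - 1) / (p - a) ≤ s ∧ s ≤ a - 1 ∧ a - 1 ≤ p - 2) := by
  have hat4 : 4 ≤ a * t := by
    calc 4 = 2 * 2 := rfl
    _ ≤ a * t := Nat.mul_le_mul ha ht
  have hst : s ∣ t - 1 := by
    have h1 : p * s ∣ p * (t - 1) := hats ▸ hdvd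
    exact (Nat.mul_dvd_mul_iff_left hp.pos).mp h1
  have hps : p * s + 1 = a * t := by
    rw [← hats, Nat.sub_add_cancel (le_trans (by norm_num) hat4)]
  have hap : a ∣ p * s + 1 := ⟨t, hps⟩
  refine ⟨hst, hap, fun _ => ?_⟩
  -- s ≤ t - 1
  have hstle : s ≤ t - 1 := Nat.le_of_dvd (by omega) hst
  -- a * (t-1) = a*t - a
  have hmul1 : a * (t - 1) = a * t - a := by
    rw [Nat.mul_sub, Nat.mul_one]
  -- s ∣ a - 1
  have hd1 : s ∣ p * s := dvd_mul_left s p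
  have hd2 : s ∣ a * (t - 1) := Dvd.dvd.mul_left hst a
  obtain ⟨A, hA⟩ : ∃ A, a * t = A := ⟨_, rfl⟩
  rw [hA] at hats hat4
  have haA : a ≤ A := by
    rw [← hA]
    exact Nat.le_mul_of_pos_right a (by omega)
  have heq : a - 1 = p * s - a * (t - 1) := by
    rw [hmul1, hA, ← hats]
    omega
  have hsa : s ∣ a - 1 := heq ▸ Nat.dvd_sub hd1 hd2
  -- a < p
  have hle : a * t - 1 ≤ p * (t - 1) := Nat.le_of_dvd (by
    have h1 : 1 ≤ t - 1 := by omega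
    exact Nat.mul_pos hp.pos h1) hdvd
  have hpt : p * (t - 1) = p * t - p := by
    rw [Nat.mul_sub, Nat.mul_one]
  rw [hpt] at hle
  have hap' : a < p := by
    by_contra h
    push_neg at h
    have h8 : p * t ≤ a * t := Nat.mul_le_mul_right t h
    rw [hA] at h8 hle
    generalize p * t = B at h8 hle
    omega
  -- a - 1 ≤ s * (p - a)
  have hmul2 : s * (p - a) = p * s - a * s := by
    rw [Nat.mul_sub, mul_comm s p, mul_comm s a]
  have has : a * s ≤ a * (t - 1) := Nat.mul_le_mul_left a hstle
  have key : a - 1 ≤ s * (p - a) := by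
    rw [hmul2, ← hats]
    rw [hmul1, hA] at has
    generalize a * s = C at has ⊢
    omega
  have hdiv : (a - 1) / (p - a) ≤ s := by
    have h0 : 0 < p - a := by omega
    calc (a - 1) / (p - a) ≤ s * (p - a) / (p - a) := Nat.div_le_div_right key
    _ = s := Nat.mul_div_cancel s h0
  exact ⟨hsa, hdiv, Nat.le_of_dvd (by omega) hsa, by omega⟩
end

section
/- Let Γ be a G-symmetric graph with a nontrivial G-invariant partition B, and for a block B let D(B) be the associated 1-(v, k, r) design with b blocks, viewed as a hypergraph with each hyperedge of size k repeated m times (m the multiplicity). If k = v - i for some i ≥ 1, then m divides both r and b. -/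
open scoped Pointwise

private lemma fiber_dvd {β γ : Type*} [DecidableEq β] [DecidableEq γ]
    (s : Finset β) (f : β → γ) (m : ℕ)
    (h : ∀ c ∈ s, (s.filter fun d => f d = f c).card = m) : m ∣ s.card := by
  classical
  rw [Finset.card_eq_sum_card_fiberwise
    (fun x hx => Finset.mem_image_of_mem f hx : ∀ x ∈ s, f x ∈ s.image f)]
  have hcong : ∀ t ∈ s.image f, (s.filter fun d => f d = t).card = m := by
    intro t ht
    obtain ⟨c, hc, rfl⟩ := Finset.mem_image.mp ht
    exact h c hc
  rw [Finset.sum_congr rfl hcong, Finset.sum_const, smul_eq_mul]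
  exact dvd_mul_left m _

/-- Lemma 3.1: for a G-symmetric graph with nontrivial G-invariant partition ℬ
    and k = v - i (i ≥ 1), the multiplicity m of the design D(B) divides both
    the replication number r and the number b of blocks. -/
theorem stmt_11
    {V : Type*} [Fintype V] [Nonempty V] {G : Type*} [Group G] [MulAction G V]
    (Γ : SimpleGraph V)
    -- G acts by automorphisms of Γ
    (hAut : ∀ (g : G) (u w : V), Γ.Adj (g • u) (g • w) ↔ Γ.Adj u w)
    -- G is transitive on vertices
    (hVert : ∀ u w : V, ∃ g : G, g • u = w)
    -- G is transitive on arcs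
    (hArc : ∀ u w u' w' : V, Γ.Adj u w → Γ.Adj u' w' →
      ∃ g : G, g • u = u' ∧ g • w = w')
    -- ℬ is a nontrivial G-invariant partition of the vertex set
    (ℬ : Set (Set V)) (hPart : Setoid.IsPartition ℬ)
    (hInv : ∀ (g : G), ∀ B ∈ ℬ, g • B ∈ ℬ)
    (hNontriv : ∀ B ∈ ℬ, 1 < B.ncard ∧ B.ncard < Fintype.card V)
    -- N C is the set of vertices having a neighbour in C
    (N : Set V → Set V)
    (hN : ∀ C : Set V, N C = {u : V | ∃ w ∈ C, Γ.Adj u w})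
    -- adjacency of blocks in the quotient graph
    (Adjℬ : Set V → Set V → Prop)
    (hAdjℬ : ∀ B C : Set V, Adjℬ B C ↔ (B ≠ C ∧ ∃ u ∈ B, ∃ w ∈ C, Γ.Adj u w))
    (v k r b m i : ℕ)
    -- v is the block size
    (hv : ∀ B ∈ ℬ, B.ncard = v)
    -- k = |B ∩ Γ(C)| for adjacent blocks B, C
    (hk : ∀ B ∈ ℬ, ∀ C ∈ ℬ, Adjℬ B C → (B ∩ N C).ncard = k)
    -- r is the replication number of D(B)
    (hr : ∀ B ∈ ℬ, ∀ α ∈ B, {C | C ∈ ℬ ∧ Adjℬ B C ∧ α ∈ N C}.ncard = r)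
    -- b is the number of blocks of D(B)
    (hb : ∀ B ∈ ℬ, {C | C ∈ ℬ ∧ Adjℬ B C}.ncard = b)
    -- m is the multiplicity of D(B)
    (hm : ∀ B ∈ ℬ, ∀ C ∈ ℬ, Adjℬ B C →
      {D | D ∈ ℬ ∧ Adjℬ B D ∧ N D ∩ B = N C ∩ B}.ncard = m)
    (hki : k = v - i) (hi : 1 ≤ i) :
    m ∣ r ∧ m ∣ b := by
  classical
  -- pick a block B and a point x ∈ B
  obtain ⟨x⟩ := (inferInstance : Nonempty V)
  obtain ⟨B, ⟨hB, hxB⟩, -⟩ := hPart.2 x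
  -- the "trace" map
  set f : Set V → Set V := fun C => N C ∩ B with hf
  -- the finset of blocks adjacent to B
  set S : Set (Set V) := {C | C ∈ ℬ ∧ Adjℬ B C} with hSdef
  have hSfin : S.Finite := Set.toFinite _
  set s : Finset (Set V) := hSfin.toFinset with hs
  -- the finset of blocks adjacent to B "containing" x
  set T : Set (Set V) := {C | C ∈ ℬ ∧ Adjℬ B C ∧ x ∈ N C} with hTdef
  have hTfin : T.Finite := Set.toFinite _
  set t : Finset (Set V) := hTfin.toFinset with ht
  -- fibers of f on s have size m
  have hfib : ∀ C ∈ s, (s.filter fun D => f D = f C).card = m := by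
    intro C hC
    rw [hs, Set.Finite.mem_toFinset] at hC
    have hmC := hm B hB C hC.1 hC.2
    have hEq : {D | D ∈ ℬ ∧ Adjℬ B D ∧ N D ∩ B = N C ∩ B} =
        ↑(s.filter fun D => f D = f C) := by
      ext D
      simp only [Finset.coe_filter, Set.mem_setOf_eq, hs, Set.Finite.mem_toFinset,
        hSdef, hf]
      tauto
    rw [hEq, Set.ncard_coe_finset] at hmC
    exact hmC
  -- fibers of f on t have size m
  have hfibT : ∀ C ∈ t, (t.filter fun D => f D = f C).card = m := by
    intro C hC
    rw [ht, Set.Finite.mem_toFinset] at hC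
    obtain ⟨hCℬ, hCadj, hxC⟩ := hC
    have hmC := hm B hB C hCℬ hCadj
    have hEq : {D | D ∈ ℬ ∧ Adjℬ B D ∧ N D ∩ B = N C ∩ B} =
        ↑(t.filter fun D => f D = f C) := by
      ext D
      simp only [Finset.coe_filter, Set.mem_setOf_eq, ht, Set.Finite.mem_toFinset,
        hTdef, hf]
      constructor
      · rintro ⟨h1, h2, h3⟩
        have hxD : x ∈ N D := by
          have : x ∈ N C ∩ B := ⟨hxC, hxB⟩
          rw [← h3] at this
          exact this.1
        exact ⟨⟨h1, h2, hxD⟩, h3⟩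
      · rintro ⟨⟨h1, h2, _⟩, h3⟩
        exact ⟨h1, h2, h3⟩
    rw [hEq, Set.ncard_coe_finset] at hmC
    exact hmC
  have hbcard : b = s.card := by
    rw [← hb B hB, hs]; exact Set.ncard_eq_toFinset_card _ hSfin
  have hrcard : r = t.card := by
    rw [← hr B hB x hxB, ht]; exact Set.ncard_eq_toFinset_card _ hTfin
  constructor
  · rw [hrcard]; exact fiber_dvd t f m hfibT
  · rw [hbcard]; exact fiber_dvd s f m hfib
end

section
/- Let Γ be a G-symmetric graph with nontrivial G-invariant partition B such that for each vertex α in a block B there is exactly one block A adjacent to B in the quotient containing no neighbour of α (i.e., r = b - 1 and the 'missing block' map α ↦ A(α) is well defined). Then for any block B, the stabilizer G_B acts 2-transitively on the neighbourhood of B in the quotient graph Γ_B, i.e., Γ_B is (G, 2)-arc transitive. -/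
open scoped Pointwise

/-- Remark 1.2(2): if every vertex α in a block B misses exactly one block
    adjacent to B (i.e. exactly one adjacent block contains no neighbour of α),
    then G_B is 2-transitive on the neighbourhood of B in the quotient, i.e.
    the quotient graph is (G,2)-arc transitive. -/
theorem stmt_12
    {V : Type*} [Fintype V] [Nonempty V] {G : Type*} [Group G] [MulAction G V]
    (Γ : SimpleGraph V)
    -- G acts by automorphisms of Γ
    (hAut : ∀ (g : G) (u w : V), Γ.Adj (g • u) (g • w) ↔ Γ.Adj u w)
    -- G is transitive on vertices
    (hVert : ∀ u w : V, ∃ g : G, g • u = w)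
    -- G is transitive on arcs
    (hArc : ∀ u w u' w' : V, Γ.Adj u w → Γ.Adj u' w' →
      ∃ g : G, g • u = u' ∧ g • w = w')
    -- ℬ is a nontrivial G-invariant partition of the vertex set
    (ℬ : Set (Set V)) (hPart : Setoid.IsPartition ℬ)
    (hInv : ∀ (g : G), ∀ B ∈ ℬ, g • B ∈ ℬ)
    (hNontriv : ∀ B ∈ ℬ, 1 < B.ncard ∧ B.ncard < Fintype.card V)
    -- adjacency of blocks in the quotient graph
    (Adjℬ : Set V → Set V → Prop)
    (hAdjℬ : ∀ B C : Set V, Adjℬ B C ↔ (B ≠ C ∧ ∃ u ∈ B, ∃ w ∈ C, Γ.Adj u w))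
    -- each vertex α of a block B has exactly one adjacent block containing
    -- no neighbour of α
    (hMissing : ∀ B ∈ ℬ, ∀ α ∈ B,
      ∃! A, A ∈ ℬ ∧ Adjℬ B A ∧ ∀ w ∈ A, ¬ Γ.Adj α w) :
    -- conclusion: G_B is 2-transitive on the neighbourhood of B in the quotient
    ∀ B ∈ ℬ, ∀ C ∈ ℬ, ∀ D ∈ ℬ, ∀ C' ∈ ℬ, ∀ D' ∈ ℬ,
      Adjℬ B C → Adjℬ B D → C ≠ D → Adjℬ B C' → Adjℬ B D' → C' ≠ D' →
      ∃ g : G, g • B = B ∧ g • C = C' ∧ g • D = D' := by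
  classical
  -- unique block containing a vertex
  have blockEq : ∀ X Y : Set V, X ∈ ℬ → Y ∈ ℬ → ∀ v, v ∈ X → v ∈ Y → X = Y := by
    intro X Y hX hY v hvX hvY
    obtain ⟨Z, ⟨hZ, hvZ⟩, hu⟩ := hPart.2 v
    have h1 := hu X ⟨hX, hvX⟩
    have h2 := hu Y ⟨hY, hvY⟩
    rw [h1, h2]
  have smul_inj : ∀ (g : G) (X Y : Set V), g • X = g • Y → X = Y := by
    intro g X Y h
    have := congrArg (fun S => g⁻¹ • S) h
    simpa [inv_smul_smul] using this
  have smul_block : ∀ (g : G) (X : Set V), X ∈ ℬ → ∀ v ∈ X, g • v ∈ g • X := by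
    intro g X _ v hv
    exact Set.smul_mem_smul_set hv
  -- equivariance of block adjacency
  have adj_smul : ∀ (g : G) (X Y : Set V), Adjℬ X Y → Adjℬ (g • X) (g • Y) := by
    intro g X Y h
    rw [hAdjℬ] at h ⊢
    obtain ⟨hne, u, hu, w, hw, huw⟩ := h
    refine ⟨fun h => hne (smul_inj g _ _ h), g • u, Set.smul_mem_smul_set hu,
      g • w, Set.smul_mem_smul_set hw, (hAut g u w).mpr huw⟩
  -- transitivity of G_B on blocks adjacent to B
  intro B hB C hC D hD C' hC' D' hD' hBC hBD hCD hBC' hBD' hCD'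
  have trans1 : ∀ C₁ C₂ : Set V, C₁ ∈ ℬ → C₂ ∈ ℬ → Adjℬ B C₁ → Adjℬ B C₂ →
      ∃ g : G, g • B = B ∧ g • C₁ = C₂ := by
    intro C₁ C₂ hC₁ hC₂ h1 h2
    rw [hAdjℬ] at h1 h2
    obtain ⟨-, u, hu, w, hw, huw⟩ := h1
    obtain ⟨-, u', hu', w', hw', huw'⟩ := h2
    obtain ⟨g, hgu, hgw⟩ := hArc u w u' w' huw huw'
    refine ⟨g, ?_, ?_⟩
    · exact blockEq _ _ (hInv g B hB) hB u' (hgu ▸ Set.smul_mem_smul_set hu) hu'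
    · exact blockEq _ _ (hInv g C₁ hC₁) hC₂ w' (hgw ▸ Set.smul_mem_smul_set hw) hw'
  -- pick α ∈ B and its missing block A
  have hBne : B.Nonempty := Set.nonempty_iff_ne_empty.mpr (fun h => hPart.1 (h ▸ hB))
  obtain ⟨α, hα⟩ := hBne
  obtain ⟨A, ⟨hAℬ, hBA, hAmiss⟩, hAuniq⟩ := hMissing B hB α hα
  -- any adjacent block ≠ A contains a neighbour of α
  have hnbr : ∀ X : Set V, X ∈ ℬ → Adjℬ B X → X ≠ A → ∃ w ∈ X, Γ.Adj α w := by
    intro X hX hBX hXA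
    by_contra h
    push_neg at h
    exact hXA (hAuniq X ⟨hX, hBX, fun w hw => h w hw⟩)
  -- G_{A,B} is transitive on neighbours of B other than A
  have transA : ∀ D₁ D₂ : Set V, D₁ ∈ ℬ → D₂ ∈ ℬ → Adjℬ B D₁ → Adjℬ B D₂ →
      D₁ ≠ A → D₂ ≠ A → ∃ g : G, g • B = B ∧ g • A = A ∧ g • D₁ = D₂ := by
    intro D₁ D₂ hD₁ hD₂ h1 h2 hn1 hn2
    obtain ⟨β, hβ, hαβ⟩ := hnbr D₁ hD₁ h1 hn1
    obtain ⟨γ, hγ, hαγ⟩ := hnbr D₂ hD₂ h2 hn2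
    obtain ⟨g, hgα, hgβ⟩ := hArc α β α γ hαβ hαγ
    have hgB : g • B = B :=
      blockEq _ _ (hInv g B hB) hB α (hgα ▸ Set.smul_mem_smul_set hα) hα
    refine ⟨g, hgB, ?_, ?_⟩
    · -- g • A is adjacent to B and misses α, hence equals A
      apply hAuniq
      refine ⟨hInv g A hAℬ, hgB ▸ adj_smul g B A hBA, ?_⟩
      intro w hw
      obtain ⟨w', hw', rfl⟩ := hw
      rw [← hgα, hAut]
      exact hAmiss w' hw'
    · exact blockEq _ _ (hInv g D₁ hD₁) hD₂ γ (hgβ ▸ Set.smul_mem_smul_set hβ) hγ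
  -- conjugate: send C to A, C' to A, use transA in between
  obtain ⟨h, hhB, hhC⟩ := trans1 C A hC hAℬ hBC hBA
  obtain ⟨h', hh'B, hh'C⟩ := trans1 C' A hC' hAℬ hBC' hBA
  have hD₁A : h • D ≠ A := fun e => hCD (smul_inj h _ _ (hhC.trans e.symm))
  have hD₂A : h' • D' ≠ A := fun e => hCD' (smul_inj h' _ _ (hh'C.trans e.symm))
  obtain ⟨k, hkB, hkA, hkD⟩ := transA (h • D) (h' • D') (hInv h D hD) (hInv h' D' hD')
    (hhB ▸ adj_smul h B D hBD) (hh'B ▸ adj_smul h' B D' hBD') hD₁A hD₂A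
  refine ⟨h'⁻¹ * k * h, ?_, ?_, ?_⟩
  · rw [mul_smul, mul_smul, hhB, hkB, inv_smul_eq_iff, hh'B]
  · rw [mul_smul, mul_smul, hhC, hkA, inv_smul_eq_iff, hh'C]
  · rw [mul_smul, mul_smul, hkD, inv_smul_smul]
end

section
/- Let p ≥ 3 be prime and suppose v - 1 = p·a where a ≥ 2 divides p - 1, b = v, r = v - p. If the quadruple (v, b, r, λ) with λ = p(a-2) + (p + a - 1)/a equals the parameter set of PG_{n-1}(n, q) as a symmetric design, i.e., v = (q^{n+1} - 1)/(q - 1) and r = (q^n - 1)/(q - 1), then no prime p and divisor a of p - 1 satisfy these equations; but the complementary parameters (v, v - r, v - 2r + λ) match PG_{n-1}(n, q) exactly when p = (q^n - 1)/(q - 1) and a = q. -/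
/-- Parameter comparison with PG_{n-1}(n,q) in Case 1 of Theorem 1:
    D*(B) itself cannot have the parameters of PG_{n-1}(n,q), but its
    complement does precisely when p = (q^n-1)/(q-1) and a = q. -/
theorem stmt_14 (p a q n : ℕ) (hp : p.Prime) (hp3 : 3 ≤ p)
    (ha : 2 ≤ a) (hdvd : a ∣ p - 1) (hq : IsPrimePow q) (hn : 2 ≤ n) :
    (¬ ((p * a + 1) * (q - 1) = q ^ (n + 1) - 1 ∧
        (p * (a - 1) + 1) * (q - 1) = q ^ n - 1)) ∧
    (((p * a + 1) * (q - 1) = q ^ (n + 1) - 1 ∧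
      ((p * a + 1) - (p * (a - 1) + 1)) * (q - 1) = q ^ n - 1 ∧
      ((p * a + 1) + (p * (a - 2) + (p + a - 1) / a) - 2 * (p * (a - 1) + 1)) * (q - 1)
          = q ^ (n - 1) - 1)
      ↔ (p * (q - 1) = q ^ n - 1 ∧ a = q)) := by
  have hq2 : 2 ≤ q := hq.two_le
  have hN : 1 ≤ q ^ n := Nat.one_le_pow _ _ (by omega)
  have hM : 1 ≤ q ^ (n + 1) := Nat.one_le_pow _ _ (by omega)
  have hE1 : 1 ≤ q ^ (n - 1) := Nat.one_le_pow _ _ (by omega)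
  have hmulsub : ∀ x y : ℕ, 1 ≤ y → x * (y - 1) + x = x * y := by
    intro x y hy
    rw [← Nat.mul_succ]; congr 1; omega
  have hsubkey : (p * a + 1) - (p * (a - 1) + 1) = p := by
    have := hmulsub p a (by omega)
    omega
  constructor
  · rintro ⟨h1, h2⟩
    -- derive p = q ^ n
    have hpow : (q : ℤ) ^ (n + 1) = q * q ^ n := by ring
    have hpe : p = q ^ n := by
      have h1' : ((p : ℤ) * a + 1) * (q - 1) = q ^ (n + 1) - 1 := by
        zify [show 1 ≤ q by omega, hM] at h1; exact h1
      have h2' : ((p : ℤ) * (a - 1) + 1) * (q - 1) = q ^ n - 1 := by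
        zify [show 1 ≤ q by omega, show 1 ≤ a by omega, hN] at h2; exact h2
      have key : (p : ℤ) * (q - 1) = q ^ n * (q - 1) := by
        linear_combination h1' - h2'
      have hc : (p : ℤ) = q ^ n := by
        have hne : (q : ℤ) - 1 ≠ 0 := by
          have : (2 : ℤ) ≤ q := by exact_mod_cast hq2
          omega
        exact mul_right_cancel₀ hne key
      exact_mod_cast hc
    have hdq : q ∣ p := hpe ▸ dvd_pow_self q (by omega)
    rcases (hp.eq_one_or_self_of_dvd q hdq) with h | h
    · omega
    · have hlt : q < q ^ n := by
        calc q < q * q := by nlinarith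
        _ = q ^ 2 := by ring
        _ ≤ q ^ n := Nat.pow_le_pow_right (by omega) hn
      omega
  constructor
  · rintro ⟨h1, h2, _⟩
    rw [hsubkey] at h2
    refine ⟨h2, ?_⟩
    have h1' : ((p : ℤ) * a + 1) * (q - 1) = q ^ (n + 1) - 1 := by
      zify [show 1 ≤ q by omega, hM] at h1; exact h1
    have h2' : (p : ℤ) * (q - 1) = q ^ n - 1 := by
      zify [show 1 ≤ q by omega, hN] at h2; exact h2
    have key : ((p : ℤ) * (q - 1)) * a = ((p : ℤ) * (q - 1)) * q := by
      linear_combination h1' - q * h2'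
    have hne : (p : ℤ) * (q - 1) ≠ 0 := by
      apply mul_ne_zero
      · exact_mod_cast Nat.Prime.ne_zero hp
      · have : (2 : ℤ) ≤ q := by exact_mod_cast hq2
        omega
    have : (a : ℤ) = q := mul_left_cancel₀ hne key
    exact_mod_cast this
  · rintro ⟨hp1, rfl⟩
    -- q has been replaced by a
    have ha1 : 1 ≤ a := by omega
    have hp1' : (p : ℤ) * (a - 1) = a ^ n - 1 := by
      zify [ha1, hN] at hp1; exact hp1
    have hpow2 : a ^ n = a ^ (n - 1) * a := by
      rw [← pow_succ]; congr 1; omega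
    have hpow2' : (a : ℤ) ^ n = a ^ (n - 1) * a := by exact_mod_cast hpow2
    have ha' : (2 : ℤ) ≤ a := by exact_mod_cast hq2
    have hp3' : (3 : ℤ) ≤ p := by exact_mod_cast hp3
    have key2 : ((p : ℤ) - a ^ (n - 1)) * a = p - 1 := by
      linear_combination hp1' + hpow2'
    have hEp : a ^ (n - 1) ≤ p := by
      have h' : ((a : ℤ)) ^ (n - 1) ≤ p := by nlinarith [key2, ha', hp3']
      exact_mod_cast h'
    set t := p - a ^ (n - 1) with htdef
    have ht : p = a ^ (n - 1) + t := by omega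
    have hE : a ^ (n - 1) = t * (a - 1) + 1 := by
      zify [ha1]
      have ht' : (p : ℤ) = a ^ (n - 1) + t := by exact_mod_cast ht
      linear_combination (-1 : ℤ) * hp1' - hpow2' + ((a : ℤ) - 1) * ht'
    have e1 : t * (a - 1) + t = t * a := hmulsub t a ha1
    have e2 : (t + 1) * a = t * a + a := by ring
    have hnum : p + a - 1 = (t + 1) * a := by omega
    have hdiv : (p + a - 1) / a = t + 1 := by
      rw [hnum, Nat.mul_div_cancel _ (by omega : 0 < a)]
    refine ⟨?_, ?_, ?_⟩
    · zify [ha1, hM]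
      linear_combination (a : ℤ) * hp1'
    · rw [hsubkey]; exact hp1
    · rw [hdiv]
      have f1 := hmulsub p a ha1
      have f2 : p * (a - 2) + p = p * (a - 1) := by
        rw [← Nat.mul_succ]; congr 1; omega
      have hX : (p * a + 1) + (p * (a - 2) + (t + 1)) - 2 * (p * (a - 1) + 1) = t := by
        omega
      rw [hX]
      omega
end
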